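/- Let D = ℂ \ K be a co-compact domain with K compact and nonempty, and let (D_j) be an exhaustion of D. Suppose x_j ∈ ℂ \ D_j for every j and x_j → x_0 in ℂ. Then x_0 ∈ ℂ \ D, and for every index k there exists J such that for all j ≥ J, the connected component of ℂ \ D_j containing x_j is contained in the connected component of ℂ \ D_k containing x_0. -/

import Mathlib

open Set Metric Filter MeasureTheory

/-- A Jordan curve: the image of an injective continuous map of the unit circle into `ℂ`. -/
def IsJordanCurve (J : Set ℂ) : Prop :=
  ∃ f : ℂ → ℂ, ContinuousOn f (sphere (0 : ℂ) 1) ∧ Set.InjOn f (sphere (0 : ℂ) 1) ∧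
    J = f '' sphere (0 : ℂ) 1

/-- `R` is the closed Jordan region bounded by the Jordan curve `J`: the union of `J`
and the bounded connected component of its complement. -/
def IsClosedJordanRegionOf (R J : Set ℂ) : Prop :=
  IsJordanCurve J ∧ ∃ x ∈ Jᶜ, Bornology.IsBounded (connectedComponentIn Jᶜ x) ∧
    R = J ∪ connectedComponentIn Jᶜ x

/-- `p` is a connected component of the set `S ⊆ ℂ`. -/
def IsCompOf (p S : Set ℂ) : Prop := ∃ x ∈ S, p = connectedComponentIn S x

/-- A co-compact domain: a nonempty connected open subset of `ℂ` whose complement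
(`K` in the notation `D = ℂ \ K`) is compact. -/
def IsCoCompactDomain (D : Set ℂ) : Prop := IsOpen D ∧ IsConnected D ∧ IsCompact Dᶜ

/-- `D` is countably connected: it has countably many complementary components. -/
def CountablyConnected (D : Set ℂ) : Prop := {p : Set ℂ | IsCompOf p Dᶜ}.Countable

/-- An exhaustion of `D`: an increasing sequence of nonempty open connected sets with
union `D`, such that each complement `ℂ \ Dseq j` is a nonempty finite union of pairwise
disjoint closed Jordan regions whose boundary Jordan curves are contained in `D`. -/
def IsExhaustion (D : Set ℂ) (Dseq : ℕ → Set ℂ) : Prop :=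
  (∀ j, IsOpen (Dseq j)) ∧ (∀ j, IsConnected (Dseq j)) ∧
  (∀ j, Dseq j ⊆ Dseq (j + 1)) ∧ (⋃ j, Dseq j) = D ∧
  ∀ j, ∃ (n : ℕ) (Reg Cur : Fin (n + 1) → Set ℂ),
    (∀ i, IsClosedJordanRegionOf (Reg i) (Cur i)) ∧
    (∀ i, Cur i ⊆ D) ∧
    (Pairwise fun i k => Disjoint (Reg i) (Reg k)) ∧
    (Dseq j)ᶜ = ⋃ i, Reg i

/-- The exhaustion `Dseq` of `D` is a refinement of the exhaustion `Dseq'` of `D`: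
every connected component `p` of `ℂ \ Dseq j` is a connected component of
`ℂ \ Dseq' k` for some `k ≥ j`. -/
def IsRefinementOf (D : Set ℂ) (Dseq Dseq' : ℕ → Set ℂ) : Prop :=
  IsExhaustion D Dseq ∧
  ∀ j p, IsCompOf p (Dseq j)ᶜ → ∃ k, j ≤ k ∧ IsCompOf p (Dseq' k)ᶜ

/-- A circle domain: a co-compact domain each of whose complementary components is a
single point or a closed disk of positive radius. -/
def IsCircleDomain (G : Set ℂ) : Prop :=
  IsCoCompactDomain G ∧
  ∀ p, IsCompOf p Gᶜ → (∃ x, p = {x}) ∨ ∃ x r, 0 < r ∧ p = closedBall x r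

/-- A conformal map on `U`: an injective holomorphic function. -/
def IsConformalOn (f : ℂ → ℂ) (U : Set ℂ) : Prop :=
  DifferentiableOn ℂ f U ∧ Set.InjOn f U

/-- `f` fixes infinity on `U`: `|f z| → ∞` as `|z| → ∞` within `U`. -/
def FixesInfinity (f : ℂ → ℂ) (U : Set ℂ) : Prop :=
  Tendsto (fun z => ‖f z‖)
    (Filter.comap (fun z : ℂ => ‖z‖) atTop ⊓ 𝓟 U) atTop

/-! `x₀ ∉ D` because `D` is the increasing union of the open sets `D_m`, each of which
eventually excludes the `x_j`. At a fixed stage `k`, `ℂ \ D_k` is a finite union of closed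
connected Jordan regions. The regions missing `x₀` form a closed set avoiding a neighbourhood
of `x₀`, so for large `j` the point `x_j ∈ ℂ \ D_j ⊆ ℂ \ D_k` lies in a region through `x₀`;
that region is connected, so `x_j` and `x₀` share a component of `ℂ \ D_k`, and the component
of `x_j` in the smaller set `ℂ \ D_j` sits inside it. -/

open Topology

section ConnectedComponentIn

variable {X : Type*} [TopologicalSpace X]

theorem closure_connectedComponentIn_inter_subset (F : Set X) (x : X) :
    closure (connectedComponentIn F x) ∩ F ⊆ connectedComponentIn F x := by
  rintro z ⟨hz_cl, hzF⟩
  have hpre : IsPreconnected (insert z (connectedComponentIn F x)) :=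
    isPreconnected_connectedComponentIn.subset_closure (subset_insert _ _)
      (insert_subset hz_cl subset_closure)
  have hsub : insert z (connectedComponentIn F x) ⊆ F :=
    insert_subset hzF (connectedComponentIn_subset F x)
  by_cases hx : x ∈ F
  · exact hpre.subset_connectedComponentIn (mem_insert_of_mem _ (mem_connectedComponentIn hx))
      hsub (mem_insert z _)
  · simp [connectedComponentIn_eq_empty hx] at hz_cl

theorem closure_connectedComponentIn_compl_subset (J : Set X) (x : X) :
    closure (connectedComponentIn Jᶜ x) ⊆ J ∪ connectedComponentIn Jᶜ x := fun z hz => by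
  by_cases hzJ : z ∈ J
  · exact Or.inl hzJ
  · exact Or.inr (closure_connectedComponentIn_inter_subset Jᶜ x ⟨hz, hzJ⟩)

theorem IsClosed.union_connectedComponentIn_compl {J : Set X} (hJ : IsClosed J) (x : X) :
    IsClosed (J ∪ connectedComponentIn Jᶜ x) := by
  rw [← closure_subset_iff_isClosed, closure_union, hJ.closure_eq]
  exact union_subset subset_union_left (closure_connectedComponentIn_compl_subset J x)

/-- A complementary component of a closed connected set `J` accumulates on `J`, since
otherwise it would be clopen. -/
theorem IsConnected.union_connectedComponentIn_compl [LocallyConnectedSpace X]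
    [PreconnectedSpace X] {J : Set X} (hJc : IsClosed J) (hJ : IsConnected J) {x : X}
    (hx : x ∈ Jᶜ) : IsConnected (J ∪ connectedComponentIn Jᶜ x) := by
  set U := connectedComponentIn Jᶜ x
  obtain ⟨y, hyJ⟩ := hJ.nonempty
  have hU_ne_univ : U ≠ univ :=
    (ne_univ_iff_exists_notMem U).mpr ⟨y, fun hyU => connectedComponentIn_subset Jᶜ x hyU hyJ⟩
  obtain ⟨z, hz⟩ := nonempty_frontier_iff.mpr ⟨⟨x, mem_connectedComponentIn hx⟩, hU_ne_univ⟩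
  rw [frontier, hJc.isOpen_compl.connectedComponentIn.interior_eq] at hz
  have hzJ : z ∈ J := by
    simpa [hz.2] using closure_connectedComponentIn_compl_subset J x hz.1
  have hconn : IsConnected (J ∪ closure U) :=
    hJ.union ⟨z, hzJ, hz.1⟩ (isConnected_connectedComponentIn_iff.mpr hx).closure
  have hclosure : J ∪ closure U = J ∪ U :=
    (union_subset subset_union_left (closure_connectedComponentIn_compl_subset J x)).antisymm
      (union_subset_union_right J subset_closure)
  rwa [hclosure] at hconn

end ConnectedComponentIn

theorem IsJordanCurve.isCompact {J : Set ℂ} (hJ : IsJordanCurve J) : IsCompact J := by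
  obtain ⟨f, hfc, -, rfl⟩ := hJ
  exact (isCompact_sphere 0 1).image_of_continuousOn hfc

theorem IsJordanCurve.isConnected {J : Set ℂ} (hJ : IsJordanCurve J) : IsConnected J := by
  obtain ⟨f, hfc, -, rfl⟩ := hJ
  exact (isConnected_sphere (by rw [Complex.rank_real_complex]; norm_num) 0 zero_le_one).image
    f hfc

theorem IsClosedJordanRegionOf.isClosed {R J : Set ℂ} (h : IsClosedJordanRegionOf R J) :
    IsClosed R := by
  obtain ⟨hJ, x, -, -, rfl⟩ := h
  exact hJ.isCompact.isClosed.union_connectedComponentIn_compl x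

theorem IsClosedJordanRegionOf.isConnected {R J : Set ℂ} (h : IsClosedJordanRegionOf R J) :
    IsConnected R := by
  obtain ⟨hJ, x, hx, -, rfl⟩ := h
  exact hJ.isConnected.union_connectedComponentIn_compl hJ.isCompact.isClosed hx

theorem notMem_iUnion_of_tendsto {X : Type*} [TopologicalSpace X] {U : ℕ → Set X}
    (hU : ∀ j, IsOpen (U j)) (hmono : Monotone U) {x : ℕ → X} (hx : ∀ j, x j ∉ U j)
    {x₀ : X} (hlim : Tendsto x atTop (𝓝 x₀)) : x₀ ∉ ⋃ j, U j := by
  intro hx₀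
  obtain ⟨m, hm⟩ := mem_iUnion.mp hx₀
  obtain ⟨j, hjU, hmj⟩ :=
    ((hlim.eventually ((hU m).mem_nhds hm)).and (eventually_ge_atTop m)).exists
  exact hx j (hmono hmj hjU)

theorem eventually_connectedComponentIn_eq_of_tendsto {X α ι : Type*} [TopologicalSpace X]
    [Finite ι] {R : ι → Set X} (hR_closed : ∀ i, IsClosed (R i))
    (hR_conn : ∀ i, IsPreconnected (R i)) {l : Filter α} {x : α → X} {x₀ : X}
    (hlim : Tendsto x l (𝓝 x₀)) (hx : ∀ᶠ j in l, x j ∈ ⋃ i, R i) :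
    ∀ᶠ j in l, connectedComponentIn (⋃ i, R i) (x j) = connectedComponentIn (⋃ i, R i) x₀ := by
  set W := ⋃ i ∈ {i | x₀ ∉ R i}, R i
  have hW : IsClosed W := (toFinite _).isClosed_biUnion fun i _ => hR_closed i
  have hx₀W : x₀ ∉ W := by simp [W]
  filter_upwards [hx, hlim.eventually (hW.isOpen_compl.mem_nhds hx₀W)] with j hxj hjW
  obtain ⟨i, hxi⟩ := mem_iUnion.mp hxj
  have hx₀i : x₀ ∈ R i := by
    by_contra h
    exact hjW (mem_biUnion (s := {i | x₀ ∉ R i}) h hxi)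
  exact connectedComponentIn_eq
    ((hR_conn i).subset_connectedComponentIn hxi (subset_iUnion R i) hx₀i)

theorem limit_point_component_absorption_general
    (D : Set ℂ)
    (Dseq : ℕ → Set ℂ) (hex : IsExhaustion D Dseq)
    (x : ℕ → ℂ) (hx : ∀ j, x j ∈ (Dseq j)ᶜ)
    (x₀ : ℂ) (hlim : Tendsto x atTop (nhds x₀)) :
    x₀ ∈ Dᶜ ∧ ∀ k, ∃ J, ∀ j, J ≤ j →
      connectedComponentIn (Dseq j)ᶜ (x j) ⊆ connectedComponentIn (Dseq k)ᶜ x₀ := by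
  obtain ⟨hopen, -, hsucc, hunion, hregions⟩ := hex
  have hmono : Monotone Dseq := monotone_nat_of_le_succ hsucc
  refine ⟨hunion ▸ notMem_iUnion_of_tendsto hopen hmono hx hlim, fun k => ?_⟩
  obtain ⟨n, Reg, Cur, hReg, -, -, hcompl⟩ := hregions k
  have hxk : ∀ᶠ j in atTop, x j ∈ ⋃ i, Reg i :=
    eventually_atTop.mpr ⟨k, fun j hkj => hcompl ▸ compl_subset_compl.mpr (hmono hkj) (hx j)⟩
  obtain ⟨J, hJ⟩ := eventually_atTop.mp
    ((eventually_connectedComponentIn_eq_of_tendsto (fun i => (hReg i).isClosed)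
      (fun i => (hReg i).isConnected.isPreconnected) hlim hxk).and (eventually_ge_atTop k))
  refine ⟨J, fun j hj => ?_⟩
  obtain ⟨hcomp_eq, hkj⟩ := hJ j hj
  rw [hcompl, ← hcomp_eq, ← hcompl]
  exact connectedComponentIn_mono _ (compl_subset_compl.mpr (hmono hkj))

/-- If `x j ∈ ℂ \ Dseq j` and `x j → x₀`, then `x₀ ∈ ℂ \ D` and the
complementary component of `x j` is eventually contained in the complementary component
of `x₀` at any fixed stage `k` of the exhaustion. -/
theorem limit_point_component_absorption
    (D : Set ℂ) (hD : IsCoCompactDomain D) (hK : Dᶜ.Nonempty)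
    (Dseq : ℕ → Set ℂ) (hex : IsExhaustion D Dseq)
    (x : ℕ → ℂ) (hx : ∀ j, x j ∈ (Dseq j)ᶜ)
    (x₀ : ℂ) (hlim : Tendsto x atTop (nhds x₀)) :
    x₀ ∈ Dᶜ ∧ ∀ k, ∃ J, ∀ j, J ≤ j →
      connectedComponentIn (Dseq j)ᶜ (x j) ⊆ connectedComponentIn (Dseq k)ᶜ x₀ :=
  limit_point_component_absorption_general D Dseq hex x hx x₀ hlim
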